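/- Let k be a field, (B, {-,-}) a Poisson k-algebra, and I ⊆ B a Poisson ideal. Let N := I·I + span_k{ {x,y} : x, y ∈ I } ⊆ B. Then N ⊆ I, N is an ideal of B, and {b, n} ∈ N for all b ∈ B and n ∈ N. Moreover the operations (b + I)·(x + N) := bx + N and {b + I, x + N} := {b,x} + N are well defined and make the quotient I/N a Poisson (B/I)-module: for all a, b ∈ B/I and m ∈ I/N one has {a, b·m} = {a,b}·m + b·{a,m}, {ab, m} = a·{b,m} + b·{a,m}, and {a, {b,m}} = {{a,b}, m} + {b, {a,m}}. -/
import Mathlib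


/-- The submodule `N = I·I + span_k {P x y : x, y ∈ I}` of the paper: the denominator of the
Poisson conormal module `I/(I² ⊕ {I,I})`. -/
def poissonConormalDen (k : Type*) {B : Type*} [Field k] [CommRing B] [Algebra k B]
    (P : B → B → B) (I : Ideal B) : Submodule k B :=
  Submodule.restrictScalars k (I * I) ⊔
    Submodule.span k {w : B | ∃ x ∈ I, ∃ y ∈ I, w = P x y}

/-- For a Poisson ideal `I` of a Poisson `k`-algebra `B`, the subspace
`N = I·I + span_k{I,I}` is contained in `I`, is a Poisson ideal of `B`, and the operations
`(b + I)·(x + N) = bx + N`, `{b + I, x + N} = {b,x} + N` are well defined and make `I/N` a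
Poisson `(B/I)`-module (stated on representatives). -/
theorem stmt8 (k B : Type*) [Field k] [CommRing B] [Algebra k B]
    (P : B → B → B)
    -- `(B, P)` is a Poisson `k`-algebra
    (hPaddl : ∀ a b c : B, P (a + b) c = P a c + P b c)
    (hPaddr : ∀ a b c : B, P a (b + c) = P a b + P a c)
    (hPsmull : ∀ (r : k) (a b : B), P (r • a) b = r • P a b)
    (hPsmulr : ∀ (r : k) (a b : B), P a (r • b) = r • P a b)
    (hPanti : ∀ a b : B, P a b = -P b a)
    (hPjac : ∀ a b c : B, P a (P b c) = P (P a b) c + P b (P a c))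
    (hPleib : ∀ a b c : B, P a (b * c) = b * P a c + c * P a b)
    -- the Poisson ideal `I`
    (I : Ideal B) (hI : ∀ b : B, ∀ x ∈ I, P b x ∈ I) :
    (∀ x ∈ poissonConormalDen k P I, x ∈ I) ∧
    (∀ b : B, ∀ x ∈ poissonConormalDen k P I, b * x ∈ poissonConormalDen k P I) ∧
    (∀ b : B, ∀ x ∈ poissonConormalDen k P I, P b x ∈ poissonConormalDen k P I) ∧
    -- the module operation and the bracket are well defined on `I/N`
    (∀ b b' x x' : B, b - b' ∈ I → x ∈ I → x' ∈ I → x - x' ∈ poissonConormalDen k P I →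
      b * x - b' * x' ∈ poissonConormalDen k P I) ∧
    (∀ b b' x x' : B, b - b' ∈ I → x ∈ I → x' ∈ I → x - x' ∈ poissonConormalDen k P I →
      P b x - P b' x' ∈ poissonConormalDen k P I) ∧
    -- the Poisson module axioms hold modulo `N`
    (∀ a b : B, ∀ m ∈ I,
      P a (b * m) - (P a b * m + b * P a m) ∈ poissonConormalDen k P I) ∧
    (∀ a b : B, ∀ m ∈ I,
      P (a * b) m - (a * P b m + b * P a m) ∈ poissonConormalDen k P I) ∧
    (∀ a b : B, ∀ m ∈ I,
      P a (P b m) - (P (P a b) m + P b (P a m)) ∈ poissonConormalDen k P I) := by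

  set N := poissonConormalDen k P I with hN
  -- basic membership facts
  have hmulmem : ∀ x ∈ I, ∀ y ∈ I, x * y ∈ N := fun x hx y hy =>
    Submodule.mem_sup_left
      ((Submodule.restrictScalars_mem k (I * I) _).mpr (Submodule.mul_mem_mul hx hy))
  have hPmem : ∀ x ∈ I, ∀ y ∈ I, P x y ∈ N := fun x hx y hy =>
    Submodule.mem_sup_right (Submodule.subset_span ⟨x, hx, y, hy, rfl⟩)
  have hP0r : ∀ b : B, P b 0 = 0 := by
    intro b
    have := hPsmulr 0 b 0
    simpa using this
  have hPsubr : ∀ a x y : B, P a (x - y) = P a x - P a y := by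
    intro a x y
    have h := hPaddr a (x - y) y
    rw [sub_add_cancel] at h
    rw [h]; ring
  have hPsubl : ∀ x y a : B, P (x - y) a = P x a - P y a := by
    intro x y a
    have h := hPaddl (x - y) y a
    rw [sub_add_cancel] at h
    rw [h]; ring
  -- N ⊆ I
  have hNI : ∀ x ∈ N, x ∈ I := by
    intro x hx
    obtain ⟨y, hy, z, hz, rfl⟩ := Submodule.mem_sup.mp hx
    refine I.add_mem (Ideal.mul_le_left (I := I)
      ((Submodule.restrictScalars_mem k (I * I) _).mp hy)) ?_
    refine Submodule.span_induction (p := fun w _ => w ∈ I) ?_ ?_ ?_ ?_ hz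
    · rintro w ⟨u, hu, v, hv, rfl⟩; exact hI u v hv
    · exact I.zero_mem
    · intro u v _ _ hu hv; exact I.add_mem hu hv
    · intro r u _ hu; exact Submodule.smul_of_tower_mem I r hu
  -- N is an ideal of B
  have hmulN : ∀ b : B, ∀ x ∈ N, b * x ∈ N := by
    intro b x hx
    obtain ⟨y, hy, z, hz, rfl⟩ := Submodule.mem_sup.mp hx
    rw [mul_add]
    refine Submodule.add_mem _ (Submodule.mem_sup_left
      ((Submodule.restrictScalars_mem k (I * I) _).mpr
        (Ideal.mul_mem_left _ b ((Submodule.restrictScalars_mem k (I * I) _).mp hy)))) ?_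
    refine Submodule.span_induction (p := fun w _ => b * w ∈ N) ?_ ?_ ?_ ?_ hz
    · rintro w ⟨u, hu, v, hv, rfl⟩
      show b * P u v ∈ N
      have key : b * P u v = P u (b * v) - v * P u b := by
        rw [hPleib u b v]; ring
      rw [key]
      refine Submodule.sub_mem _ (hPmem u hu _ (Ideal.mul_mem_left _ b hv)) ?_
      have hPub : P u b ∈ I := by
        rw [hPanti u b]; exact I.neg_mem (hI b u hu)
      exact hmulmem v hv _ hPub
    · show b * 0 ∈ N
      simp
    · intro u v _ _ hu hv
      show b * (u + v) ∈ N
      rw [mul_add]; exact Submodule.add_mem _ hu hv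
    · intro r u _ hu
      show b * (r • u) ∈ N
      rw [mul_smul_comm]; exact Submodule.smul_mem _ r hu
  -- N is closed under Poisson bracket with B
  have hPN : ∀ b : B, ∀ x ∈ N, P b x ∈ N := by
    intro b x hx
    obtain ⟨y, hy, z, hz, rfl⟩ := Submodule.mem_sup.mp hx
    rw [hPaddr]
    refine Submodule.add_mem _ ?_ ?_
    · refine Submodule.mul_induction_on ((Submodule.restrictScalars_mem k (I * I) _).mp hy) ?_ ?_
      · intro m hm n hn
        rw [hPleib b m n]
        exact Submodule.add_mem _ (hmulmem m hm _ (hI b n hn)) (hmulmem n hn _ (hI b m hm))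
      · intro u v hu hv
        rw [hPaddr]; exact Submodule.add_mem _ hu hv
    · refine Submodule.span_induction (p := fun w _ => P b w ∈ N) ?_ ?_ ?_ ?_ hz
      · rintro w ⟨u, hu, v, hv, rfl⟩
        show P b (P u v) ∈ N
        rw [hPjac b u v]
        exact Submodule.add_mem _ (hPmem _ (hI b u hu) v hv) (hPmem u hu _ (hI b v hv))
      · show P b 0 ∈ N
        rw [hP0r]; exact Submodule.zero_mem _
      · intro u v _ _ hu hv
        show P b (u + v) ∈ N
        rw [hPaddr]; exact Submodule.add_mem _ hu hv
      · intro r u _ hu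
        show P b (r • u) ∈ N
        rw [hPsmulr]; exact Submodule.smul_mem _ r hu
  refine ⟨hNI, hmulN, hPN, ?_, ?_, ?_, ?_, ?_⟩
  · intro b b' x x' hbb' hx hx' hxx'
    have key : b * x - b' * x' = b * (x - x') + (b - b') * x' := by ring
    rw [key]
    exact Submodule.add_mem _ (hmulN b _ hxx') (hmulmem _ hbb' _ hx')
  · intro b b' x x' hbb' hx hx' hxx'
    have key : P b x - P b' x' = P b (x - x') + P (b - b') x' := by
      rw [hPsubr, hPsubl]; ring
    rw [key]
    exact Submodule.add_mem _ (hPN b _ hxx') (hPmem _ hbb' _ hx')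
  · intro a b m hm
    rw [hPleib a b m]
    have : b * P a m + m * P a b - (P a b * m + b * P a m) = 0 := by ring
    rw [this]; exact Submodule.zero_mem _
  · intro a b m hm
    have key : P (a * b) m - (a * P b m + b * P a m) = 0 := by
      have h1 : P (a * b) m = -P m (a * b) := by rw [hPanti]
      have h2 : P m (a * b) = a * P m b + b * P m a := hPleib m a b
      have h3 : P m b = -P b m := by rw [hPanti]
      have h4 : P m a = -P a m := by rw [hPanti]
      rw [h1, h2, h3, h4]; ring
    rw [key]; exact Submodule.zero_mem _
  · intro a b m hm
    rw [hPjac a b m, sub_self]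
    exact Submodule.zero_mem _
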